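/- arXiv:2210.16446 — 4 statements merged into one kernel-verified Lean document; each statement's English description precedes it below -/
import Mathlib

section
/- Measurable imbeddability is transitive: if Λ measurably imbeds into Δ with coupling Σ₁ and Δ measurably imbeds into Γ with coupling Σ₂, then Λ measurably imbeds into Γ via the coupling Σ = (Σ₁ × Σ₂)/Δ where Δ acts diagonally, and the index satisfies [Γ:Λ]_Σ = [Γ:Δ]_{Σ₁}·[Δ:Λ]_{Σ₂}. -/
/-!
The quotient `(Σ₁ × Σ₂)/Δ` is modelled by `Σ₁ × Σ₂` with the σ-algebra of sets invariant under
the diagonal action `δ • (x, y) = (x δ, δ y)`, and with the measure `S ↦ (μ₁ × μ₂)(S ∩ (X₁ × Σ₂))`.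
Two fundamental domains of a measure-preserving action cut every invariant set in the same measure;
since `Λ` (acting on `Σ₁`) and `Γ` (acting on `Σ₂`) commute with `Δ` and map `X₁ × Σ₂` to other
fundamental domains of `Δ`, they preserve this measure. The `Δ`-saturations of `X₁ × X₂` and
`Y₁ × Y₂` are fundamental domains for `Γ` and `Λ`: almost every point has a unique `δ` moving its
first coordinate into `X₁`, and then a unique `γ` moving the second one into `X₂` (symmetrically
for `Y`). Measuring the saturations against the fundamental domains `X₁ × Σ₂` and `Σ₁ × Y₂` of `Δ`
gives `μ₁ X₁ * μ₂ X₂` and `μ₁ Y₁ * μ₂ Y₂`, whence the index formula.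
-/

open MeasureTheory

/-- A measurable fundamental domain for an action of a group `G` on `Ω` given by the
plain map `a : G → Ω → Ω`. -/
def IsFundDom {G Ω : Type*} [MeasurableSpace Ω] (a : G → Ω → Ω) (μ : Measure Ω)
    (s : Set Ω) : Prop :=
  NullMeasurableSet s μ ∧ (∀ᵐ x ∂μ, ∃ g : G, a g x ∈ s) ∧
    Pairwise fun g₁ g₂ : G => AEDisjoint μ (a g₁ ⁻¹' s) (a g₂ ⁻¹' s)

/-- A measured space with commuting measure-preserving actions of `Λ` and `Γ`
(equivalently, a measure-preserving action of `Λ × Γ`). -/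
structure Coupling (Λ Γ Ω : Type*) [Group Λ] [Group Γ] [MeasurableSpace Ω]
    (μ : Measure Ω) where
  actL : Λ → Ω → Ω
  actR : Γ → Ω → Ω
  actL_one : ∀ x, actL 1 x = x
  actL_mul : ∀ a b x, actL (a * b) x = actL a (actL b x)
  actR_one : ∀ x, actR 1 x = x
  actR_mul : ∀ a b x, actR (a * b) x = actR a (actR b x)
  comm : ∀ l g x, actL l (actR g x) = actR g (actL l x)
  mpL : ∀ l, MeasurePreserving (actL l) μ μ
  mpR : ∀ g, MeasurePreserving (actR g) μ μ

open Set

section FundamentalDomain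

variable {G Ω : Type*} {m : MeasurableSpace Ω} {μ : Measure Ω} {a : G → Ω → Ω} {F F' : Set Ω}

structure IsMeasurePreservingAction [Group G] (a : G → Ω → Ω) (μ : Measure Ω) : Prop where
  map_one : ∀ x, a 1 x = x
  map_mul : ∀ g h x, a (g * h) x = a g (a h x)
  measurePreserving : ∀ g, MeasurePreserving (a g) μ μ

variable [Countable G]

theorem isFundDom_iff_ae :
    IsFundDom a μ F ↔ NullMeasurableSet F μ ∧ ∀ᵐ x ∂μ, ∃! g, a g x ∈ F := by
  refine ⟨fun h => ⟨h.1, ?_⟩, fun ⟨hF, h⟩ => ⟨hF, h.mono fun x hx => hx.exists, ?_⟩⟩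
  · have huniq : ∀ᵐ x ∂μ, ∀ g₁ g₂, a g₁ x ∈ F → a g₂ x ∈ F → g₁ = g₂ := by
      refine ae_all_iff.2 fun g₁ => ae_all_iff.2 fun g₂ => ?_
      rcases eq_or_ne g₁ g₂ with rfl | hne
      · exact ae_of_all _ fun _ _ _ => rfl
      · exact (measure_eq_zero_iff_ae_notMem.1 (h.2.2 hne)).mono
          fun x hx h₁ h₂ => (hx ⟨h₁, h₂⟩).elim
    filter_upwards [h.2.1, huniq] with x ⟨g, hg⟩ hx
    exact ⟨g, hg, fun g' hg' => hx g' g hg' hg⟩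
  · intro g₁ g₂ hne
    exact measure_mono_null (fun x hx (hu : ∃! g, a g x ∈ F) => hne (hu.unique hx.1 hx.2))
      (ae_iff.1 h)

theorem MeasurableSet.setOf_existsUnique {s : G → Set Ω} (hs : ∀ g, MeasurableSet (s g)) :
    MeasurableSet {x | ∃! g, x ∈ s g} := by
  have hmem (g : G) : Measurable fun x => x ∈ s g := measurableSet_setOfPred.1 (hs g)
  exact measurableSet_setOfPred.2
    (.exists fun g => (hmem g).and (.forall fun g' => (hmem g').imp measurable_const))

namespace IsFundDom

theorem ae_existsUnique (h : IsFundDom a μ F) : ∀ᵐ x ∂μ, ∃! g, a g x ∈ F :=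
  (isFundDom_iff_ae.1 h).2

theorem congr_ae (ha : ∀ g, Measure.QuasiMeasurePreserving (a g) μ μ) (h : IsFundDom a μ F)
    (hFF' : F =ᵐ[μ] F') : IsFundDom a μ F' := by
  have hmem : ∀ᵐ x ∂μ, ∀ g, a g x ∈ F ↔ a g x ∈ F' :=
    ae_all_iff.2 fun g => Filter.eventuallyEq_set.1 ((ha g).preimage_ae_eq hFF')
  refine isFundDom_iff_ae.2 ⟨h.1.congr hFF', ?_⟩
  filter_upwards [h.ae_existsUnique, hmem] with x hx hx'
  exact (existsUnique_congr hx').1 hx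

theorem toMeasurable (ha : ∀ g, Measure.QuasiMeasurePreserving (a g) μ μ)
    (h : IsFundDom a μ F) : IsFundDom a μ (toMeasurable μ F) :=
  h.congr_ae ha h.1.toMeasurable_ae_eq.symm

theorem preimage {T : Ω → Ω} (hT : Measure.QuasiMeasurePreserving T μ μ)
    (hcomm : ∀ g x, T (a g x) = a g (T x)) (h : IsFundDom a μ F) : IsFundDom a μ (T ⁻¹' F) :=
  isFundDom_iff_ae.2 ⟨h.1.preimage hT, (hT.ae h.ae_existsUnique).mono fun x hx => by
    simpa only [mem_preimage, hcomm] using hx⟩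

theorem sFinite (ha : ∀ g, MeasurePreserving (a g) μ μ) (h : IsFundDom a μ F) (hF : μ F ≠ ⊤) :
    SFinite μ := by
  have (g : G) : IsFiniteMeasure (μ.restrict (a g ⁻¹' F)) :=
    isFiniteMeasure_restrict.2 (by rwa [(ha g).measure_preimage h.1])
  refine sFinite_of_absolutelyContinuous
    (ν := Measure.sum fun g => μ.restrict (a g ⁻¹' F)) (Measure.absolutelyContinuous_of_le ?_)
  calc μ = μ.restrict (⋃ g, a g ⁻¹' F) :=
        (Measure.restrict_eq_self_of_ae_mem (h.2.1.mono fun x hx => mem_iUnion.2 hx)).symm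
    _ ≤ _ := Measure.restrict_iUnion_le

variable [Group G]

theorem measure_inter_eq (ha : IsMeasurePreservingAction a μ) (hF : IsFundDom a μ F)
    (hF' : IsFundDom a μ F') {S : Set Ω} (hS : MeasurableSet S) (hSinv : ∀ g, a g ⁻¹' S = S) :
    μ (S ∩ F) = μ (S ∩ F') := by
  let _ : MulAction G Ω := { smul := a, one_smul := ha.map_one, mul_smul := ha.map_mul }
  have : MeasurableConstSMul G Ω := ⟨fun g => (ha.measurePreserving g).measurable⟩
  have : SMulInvariantMeasure G Ω μ :=
    ⟨fun g _ hs => (ha.measurePreserving g).measure_preimage hs.nullMeasurableSet⟩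
  have hfd {F : Set Ω} (h : IsFundDom a μ F) : IsFundamentalDomain G F μ :=
    { nullMeasurableSet := h.1
      ae_covers := h.2.1
      aedisjoint := fun g₁ g₂ hne => by
        rw [Function.onFun, ← preimage_smul_inv, ← preimage_smul_inv]
        exact h.2.2 (inv_injective.ne hne) }
  exact (hfd hF).measure_set_eq (hfd hF') hS hSinv

theorem measure_iUnion_preimage_inter (ha_one : ∀ x, a 1 x = x) (h : IsFundDom a μ F)
    {E : Set Ω} (hEF : E ⊆ F) : μ ((⋃ g, a g ⁻¹' E) ∩ F) = μ E := by
  refine le_antisymm (measure_mono_ae ?_)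
    (measure_mono fun x hx => ⟨mem_iUnion.2 ⟨1, by rwa [mem_preimage, ha_one]⟩, hEF hx⟩)
  filter_upwards [h.ae_existsUnique] with x hx ⟨hxE, hxF⟩
  obtain ⟨g, hg⟩ := mem_iUnion.1 hxE
  obtain rfl : g = 1 := hx.unique (hEF hg) (by rwa [ha_one])
  rwa [mem_preimage, ha_one] at hg

end IsFundDom

end FundamentalDomain

section Quotient

variable {Δ Ω : Type*} [Group Δ] [MeasurableSpace Ω] {P : Measure Ω} {d : Δ → Ω → Ω}
  {F : Set Ω}

/-- The quotient `Ω / Δ` is modelled by `Ω` itself with the σ-algebra of `d`-invariant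
measurable sets. -/
@[reducible] def invariantSigma (d : Δ → Ω → Ω) : MeasurableSpace Ω :=
  ⨅ δ, MeasurableSpace.invariants (d δ)

theorem measurableSet_invariantSigma {S : Set Ω} :
    MeasurableSet[invariantSigma d] S ↔ MeasurableSet S ∧ ∀ δ, d δ ⁻¹' S = S := by
  change MeasurableSet[⨅ δ, MeasurableSpace.invariants (d δ)] S ↔ _
  simp only [MeasurableSpace.measurableSet_iInf,
    MeasurableSpace.measurableSet_invariants, forall_and, forall_const]

theorem invariantSigma_le : invariantSigma d ≤ ‹MeasurableSpace Ω› :=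
  iInf_le_of_le 1 (MeasurableSpace.invariants_le _)

theorem Measurable.invariantSigma {T : Ω → Ω} (hT : Measurable T)
    (hcomm : ∀ δ x, T (d δ x) = d δ (T x)) :
    Measurable[invariantSigma d, invariantSigma d] T := fun S hS => by
  rw [measurableSet_invariantSigma] at hS ⊢
  refine ⟨hT hS.1, fun δ => ?_⟩
  rw [← preimage_comp, show T ∘ d δ = d δ ∘ T from funext (hcomm δ), preimage_comp, hS.2 δ]

noncomputable def quotMeasure (d : Δ → Ω → Ω) (P : Measure Ω) (F : Set Ω) :
    @Measure Ω (invariantSigma d) :=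
  (P.restrict F).trim invariantSigma_le

theorem quotMeasure_apply {S : Set Ω} (hS : MeasurableSet[invariantSigma d] S) :
    quotMeasure d P F S = P (S ∩ F) := by
  rw [quotMeasure, trim_measurableSet_eq _ hS,
    Measure.restrict_apply (measurableSet_invariantSigma.1 hS).1]

theorem ae_quotMeasure_of_ae {p : Ω → Prop} (hp : MeasurableSet[invariantSigma d] {x | p x})
    (h : ∀ᵐ x ∂P, p x) : ∀ᵐ x ∂quotMeasure d P F, p x := by
  rw [ae_iff, ← compl_ofPred, quotMeasure_apply hp.compl]
  exact measure_mono_null inter_subset_left (ae_iff.1 h)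

variable [Countable Δ]

theorem measurableSet_invariantSigma_iUnion_preimage (hd : IsMeasurePreservingAction d P)
    {E : Set Ω} (hE : MeasurableSet E) : MeasurableSet[invariantSigma d] (⋃ δ, d δ ⁻¹' E) := by
  refine measurableSet_invariantSigma.2
    ⟨.iUnion fun δ => (hd.measurePreserving δ).measurable hE, fun δ₀ => ?_⟩
  ext x
  simp only [mem_preimage, mem_iUnion, ← hd.map_mul]
  exact ⟨fun ⟨δ, h⟩ => ⟨_, h⟩, fun ⟨δ, h⟩ => ⟨δ * δ₀⁻¹, by rwa [inv_mul_cancel_right]⟩⟩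

theorem MeasureTheory.MeasurePreserving.quotMeasure (hd : IsMeasurePreservingAction d P)
    (hF : IsFundDom d P F) {T : Ω → Ω} (hT : MeasurePreserving T P P)
    (hcomm : ∀ δ x, T (d δ x) = d δ (T x)) :
    @MeasurePreserving Ω Ω (invariantSigma d) (invariantSigma d) T
      (quotMeasure d P F) (quotMeasure d P F) := by
  have hTm := hT.measurable.invariantSigma hcomm
  refine @MeasurePreserving.mk Ω Ω (invariantSigma d) (invariantSigma d) T _ _ hTm
    (@Measure.ext _ (invariantSigma d) _ _ fun S hS => ?_)
  obtain ⟨hSm, -⟩ := measurableSet_invariantSigma.1 hS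
  obtain ⟨hTSm, hTSinv⟩ := measurableSet_invariantSigma.1 (hTm hS)
  rw [Measure.map_apply hTm hS, quotMeasure_apply (hTm hS), quotMeasure_apply hS,
    hF.measure_inter_eq hd (hF.preimage hT.quasiMeasurePreserving hcomm) hTSm hTSinv,
    ← preimage_inter, hT.measure_preimage (hSm.nullMeasurableSet.inter hF.1)]

theorem quotMeasure_iUnion_preimage (hd : IsMeasurePreservingAction d P) (hF : IsFundDom d P F)
    {F' E : Set Ω} (hF' : IsFundDom d P F') (hE : MeasurableSet E) (hEF' : E ⊆ F') :
    quotMeasure d P F (⋃ δ, d δ ⁻¹' E) = P E := by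
  have hsat := measurableSet_invariantSigma_iUnion_preimage hd hE
  obtain ⟨hm, hinv⟩ := measurableSet_invariantSigma.1 hsat
  rw [quotMeasure_apply hsat, hF.measure_inter_eq hd hF' hm hinv,
    hF'.measure_iUnion_preimage_inter hd.map_one hEF']

theorem isFundDom_quotMeasure_iUnion_preimage {G : Type*} [Countable G] {e : G → Ω → Ω}
    (he : ∀ g, Measurable (e g)) (hcomm : ∀ g δ x, e g (d δ x) = d δ (e g x))
    (hd : IsMeasurePreservingAction d P) {E : Set Ω} (hE : MeasurableSet E)
    (h : ∀ᵐ x ∂P, ∃! g, ∃ δ, d δ (e g x) ∈ E) :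
    @IsFundDom G Ω (invariantSigma d) e (quotMeasure d P F) (⋃ δ, d δ ⁻¹' E) := by
  have hsat := measurableSet_invariantSigma_iUnion_preimage hd hE
  refine isFundDom_iff_ae.2 ⟨hsat.nullMeasurableSet, ae_quotMeasure_of_ae ?_ ?_⟩
  · exact MeasurableSet.setOf_existsUnique fun g => (he g).invariantSigma (hcomm g) hsat
  · simpa only [mem_iUnion, mem_preimage] using h

variable {Λ Γ : Type*} [Group Λ] [Group Γ]

def Coupling.quotient (c : Coupling Λ Γ Ω P) (hd : IsMeasurePreservingAction d P)
    (hF : IsFundDom d P F) (hL : ∀ l δ x, c.actL l (d δ x) = d δ (c.actL l x))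
    (hR : ∀ γ δ x, c.actR γ (d δ x) = d δ (c.actR γ x)) :
    @Coupling Λ Γ Ω _ _ (invariantSigma d) (quotMeasure d P F) :=
  @Coupling.mk Λ Γ Ω _ _ (invariantSigma d) (quotMeasure d P F) c.actL c.actR c.actL_one
    c.actL_mul c.actR_one c.actR_mul c.comm (fun l => (c.mpL l).quotMeasure hd hF (hL l))
    (fun γ => (c.mpR γ).quotMeasure hd hF (hR γ))

end Quotient

theorem existsUnique_exists_and {α β : Sort*} {p : α → Prop} {q : α → β → Prop}
    (hp : ∃! a, p a) (hq : ∀ a, ∃! b, q a b) : ∃! b, ∃ a, p a ∧ q a b := by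
  obtain ⟨a, ha, hpu⟩ := hp
  obtain ⟨b, hb, hqu⟩ := hq a
  refine ⟨b, ⟨a, ha, hb⟩, fun b' ⟨a', ha', hb'⟩ => ?_⟩
  obtain rfl := hpu a' ha'
  exact hqu b' hb'

section Product

variable {Λ Δ Γ Ω₁ Ω₂ : Type*} [Group Λ] [Group Δ] [Group Γ]
  [MeasurableSpace Ω₁] [MeasurableSpace Ω₂] {μ₁ : Measure Ω₁} {μ₂ : Measure Ω₂}

theorem IsFundDom.prod_univ {G : Type*} [Countable G] {a : G → Ω₁ → Ω₁} (b : G → Ω₂ → Ω₂)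
    {F : Set Ω₁} (h : IsFundDom a μ₁ F) :
    IsFundDom (fun g => Prod.map (a g) (b g)) (μ₁.prod μ₂) (F ×ˢ univ) :=
  isFundDom_iff_ae.2 ⟨h.1.prod .univ,
    (Measure.quasiMeasurePreserving_fst.ae h.ae_existsUnique).mono fun z hz => by
      simpa only [Prod.map, mem_prod, mem_univ, and_true] using hz⟩

theorem IsFundDom.univ_prod {G : Type*} [Countable G] (a : G → Ω₁ → Ω₁)
    {b : G → Ω₂ → Ω₂} {F : Set Ω₂} (h : IsFundDom b μ₂ F) :
    IsFundDom (fun g => Prod.map (a g) (b g)) (μ₁.prod μ₂) (univ ×ˢ F) :=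
  isFundDom_iff_ae.2 ⟨NullMeasurableSet.prod .univ h.1,
    (Measure.quasiMeasurePreserving_snd.ae h.ae_existsUnique).mono fun z hz => by
      simpa only [Prod.map, mem_prod, mem_univ, true_and] using hz⟩

variable [SFinite μ₁] [SFinite μ₂]

namespace Coupling

variable (c₁ : Coupling Λ Δ Ω₁ μ₁) (c₂ : Coupling Δ Γ Ω₂ μ₂)

def prod : Coupling Λ Γ (Ω₁ × Ω₂) (μ₁.prod μ₂) where
  actL l := Prod.map (c₁.actL l) id
  actR γ := Prod.map id (c₂.actR γ)
  actL_one z := Prod.ext (c₁.actL_one z.1) rfl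
  actL_mul a b z := Prod.ext (c₁.actL_mul a b z.1) rfl
  actR_one z := Prod.ext rfl (c₂.actR_one z.2)
  actR_mul a b z := Prod.ext rfl (c₂.actR_mul a b z.2)
  comm _ _ _ := rfl
  mpL l := (c₁.mpL l).prod (.id μ₂)
  mpR γ := (MeasurePreserving.id μ₁).prod (c₂.mpR γ)

def diagAct (δ : Δ) : Ω₁ × Ω₂ → Ω₁ × Ω₂ :=
  Prod.map (c₁.actR δ) (c₂.actL δ)

theorem isMeasurePreservingAction_diagAct :
    IsMeasurePreservingAction (diagAct c₁ c₂) (μ₁.prod μ₂) where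
  map_one z := Prod.ext (c₁.actR_one z.1) (c₂.actL_one z.2)
  map_mul a b z := Prod.ext (c₁.actR_mul a b z.1) (c₂.actL_mul a b z.2)
  measurePreserving δ := (c₁.mpR δ).prod (c₂.mpL δ)

theorem prod_actL_diagAct (l : Λ) (δ : Δ) (z : Ω₁ × Ω₂) :
    (c₁.prod c₂).actL l (diagAct c₁ c₂ δ z) = diagAct c₁ c₂ δ ((c₁.prod c₂).actL l z) :=
  Prod.ext (c₁.comm l δ z.1) rfl

theorem prod_actR_diagAct (γ : Γ) (δ : Δ) (z : Ω₁ × Ω₂) :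
    (c₁.prod c₂).actR γ (diagAct c₁ c₂ δ z) = diagAct c₁ c₂ δ ((c₁.prod c₂).actR γ z) :=
  Prod.ext rfl (c₂.comm δ γ z.2).symm

variable [Countable Δ]

/-- The coupling `(Σ₁ × Σ₂)/Δ`. -/
noncomputable def comp {X₁ : Set Ω₁} (hX₁ : IsFundDom c₁.actR μ₁ X₁) :
    @Coupling Λ Γ (Ω₁ × Ω₂) _ _ (invariantSigma (diagAct c₁ c₂))
      (quotMeasure (diagAct c₁ c₂) (μ₁.prod μ₂) (X₁ ×ˢ univ)) :=
  (c₁.prod c₂).quotient (c₁.isMeasurePreservingAction_diagAct c₂) (hX₁.prod_univ _)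
    (c₁.prod_actL_diagAct c₂) (c₁.prod_actR_diagAct c₂)

theorem ae_existsUnique_prod_actR [Countable Γ] {X₁ : Set Ω₁} {X₂ : Set Ω₂}
    (hX₁ : IsFundDom c₁.actR μ₁ X₁) (hX₂ : IsFundDom c₂.actR μ₂ X₂) :
    ∀ᵐ z ∂μ₁.prod μ₂, ∃! γ, ∃ δ, diagAct c₁ c₂ δ ((c₁.prod c₂).actR γ z) ∈ X₁ ×ˢ X₂ := by
  have h₂ : ∀ᵐ y ∂μ₂, ∀ δ, ∃! γ, c₂.actR γ (c₂.actL δ y) ∈ X₂ :=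
    ae_all_iff.2 fun δ => (c₂.mpL δ).quasiMeasurePreserving.ae hX₂.ae_existsUnique
  filter_upwards [Measure.quasiMeasurePreserving_fst.ae hX₁.ae_existsUnique,
    Measure.quasiMeasurePreserving_snd.ae h₂] with z h₁ h₂
  simpa only [diagAct, prod, Prod.map, mem_prod, id, c₂.comm] using existsUnique_exists_and h₁ h₂

theorem ae_existsUnique_prod_actL [Countable Λ] {Y₁ : Set Ω₁} {Y₂ : Set Ω₂}
    (hY₁ : IsFundDom c₁.actL μ₁ Y₁) (hY₂ : IsFundDom c₂.actL μ₂ Y₂) :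
    ∀ᵐ z ∂μ₁.prod μ₂, ∃! l, ∃ δ, diagAct c₁ c₂ δ ((c₁.prod c₂).actL l z) ∈ Y₁ ×ˢ Y₂ := by
  have h₁ : ∀ᵐ x ∂μ₁, ∀ δ, ∃! l, c₁.actL l (c₁.actR δ x) ∈ Y₁ :=
    ae_all_iff.2 fun δ => (c₁.mpR δ).quasiMeasurePreserving.ae hY₁.ae_existsUnique
  filter_upwards [Measure.quasiMeasurePreserving_fst.ae h₁,
    Measure.quasiMeasurePreserving_snd.ae hY₂.ae_existsUnique] with z h₁ h₂
  simpa only [diagAct, prod, Prod.map, mem_prod, id, ← c₁.comm, and_comm]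
    using existsUnique_exists_and h₂ h₁

theorem exists_comp [Countable Λ] [Countable Γ] {X₁ Y₁ : Set Ω₁} {X₂ Y₂ : Set Ω₂}
    (hX₁ : IsFundDom c₁.actR μ₁ X₁) (hY₁ : IsFundDom c₁.actL μ₁ Y₁)
    (hX₂ : IsFundDom c₂.actR μ₂ X₂) (hY₂ : IsFundDom c₂.actL μ₂ Y₂)
    (hX₁m : MeasurableSet X₁) (hY₁m : MeasurableSet Y₁)
    (hX₂m : MeasurableSet X₂) (hY₂m : MeasurableSet Y₂) :
    ∃ (_ : MeasurableSpace (Ω₁ × Ω₂)) (μ : Measure (Ω₁ × Ω₂)) (c : Coupling Λ Γ (Ω₁ × Ω₂) μ)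
      (X Y : Set (Ω₁ × Ω₂)), IsFundDom c.actR μ X ∧ IsFundDom c.actL μ Y ∧
        μ X = μ₁ X₁ * μ₂ X₂ ∧ μ Y = μ₁ Y₁ * μ₂ Y₂ := by
  have hd := c₁.isMeasurePreservingAction_diagAct c₂
  have hF := hX₁.prod_univ (μ₂ := μ₂) c₂.actL
  refine ⟨_, _, c₁.comp c₂ hX₁, _, _,
    isFundDom_quotMeasure_iUnion_preimage (fun γ => ((c₁.prod c₂).mpR γ).measurable)
      (c₁.prod_actR_diagAct c₂) hd (hX₁m.prod hX₂m) (c₁.ae_existsUnique_prod_actR c₂ hX₁ hX₂),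
    isFundDom_quotMeasure_iUnion_preimage (fun l => ((c₁.prod c₂).mpL l).measurable)
      (c₁.prod_actL_diagAct c₂) hd (hY₁m.prod hY₂m) (c₁.ae_existsUnique_prod_actL c₂ hY₁ hY₂),
    ?_, ?_⟩
  · rw [quotMeasure_iUnion_preimage hd hF hF (hX₁m.prod hX₂m)
      (prod_mono subset_rfl (subset_univ _)), Measure.prod_prod]
  · rw [quotMeasure_iUnion_preimage hd hF (hY₂.univ_prod c₁.actR) (hY₁m.prod hY₂m)
      (prod_mono (subset_univ _) subset_rfl), Measure.prod_prod]

end Coupling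

end Product

/-- transitivity of measurable imbeddability. Given an MI-coupling of
`Λ` into `Δ` with fundamental domains `Y₁` (for `Λ`) and `X₁` (for `Δ`), and an
MI-coupling of `Δ` into `Γ` with fundamental domains `Y₂` (for `Δ`) and `X₂` (for `Γ`),
there is an MI-coupling of `Λ` into `Γ` (the quotient of the product by the diagonal
`Δ`-action) whose index is the product of the two indices. -/
theorem MI_trans {Λ Δ Γ : Type} [Group Λ] [Countable Λ] [Group Δ] [Countable Δ]
    [Group Γ] [Countable Γ]
    {Ω₁ : Type} [MeasurableSpace Ω₁] {μ₁ : Measure Ω₁} (c₁ : Coupling Λ Δ Ω₁ μ₁)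
    {Ω₂ : Type} [MeasurableSpace Ω₂] {μ₂ : Measure Ω₂} (c₂ : Coupling Δ Γ Ω₂ μ₂)
    (X₁ Y₁ : Set Ω₁) (hX₁ : IsFundDom c₁.actR μ₁ X₁) (hY₁ : IsFundDom c₁.actL μ₁ Y₁)
    (hX₁fin : μ₁ X₁ < ⊤)
    (X₂ Y₂ : Set Ω₂) (hX₂ : IsFundDom c₂.actR μ₂ X₂) (hY₂ : IsFundDom c₂.actL μ₂ Y₂)
    (hX₂fin : μ₂ X₂ < ⊤) :
    ∃ (Ω : Type) (_ : MeasurableSpace Ω) (μ : Measure Ω) (c : Coupling Λ Γ Ω μ)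
      (X Y : Set Ω), IsFundDom c.actR μ X ∧ IsFundDom c.actL μ Y ∧ μ X < ⊤ ∧
        μ Y / μ X = (μ₂ Y₂ / μ₂ X₂) * (μ₁ Y₁ / μ₁ X₁) := by
  have := hX₁.sFinite c₁.mpR hX₁fin.ne
  have := hX₂.sFinite c₂.mpR hX₂fin.ne
  obtain ⟨_, μ, c, X, Y, hX, hY, hμX, hμY⟩ := c₁.exists_comp c₂
    (hX₁.toMeasurable fun δ => (c₁.mpR δ).quasiMeasurePreserving)
    (hY₁.toMeasurable fun l => (c₁.mpL l).quasiMeasurePreserving)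
    (hX₂.toMeasurable fun γ => (c₂.mpR γ).quasiMeasurePreserving)
    (hY₂.toMeasurable fun δ => (c₂.mpL δ).quasiMeasurePreserving)
    (measurableSet_toMeasurable _ _) (measurableSet_toMeasurable _ _)
    (measurableSet_toMeasurable _ _) (measurableSet_toMeasurable _ _)
  simp only [measure_toMeasurable] at hμX hμY
  refine ⟨Ω₁ × Ω₂, _, μ, c, X, Y, hX, hY, hμX ▸ ENNReal.mul_lt_top hX₁fin hX₂fin, ?_⟩
  rw [hμX, hμY, div_eq_mul_inv, ENNReal.mul_inv (.inr hX₂fin.ne) (.inl hX₁fin.ne),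
    div_eq_mul_inv, div_eq_mul_inv]
  ring
end

section
/- Suppose (X,μ) is a probability space with a measure-preserving Λ-action and α: Λ × X → Γ is a measurable cocycle (α(λλ',x) = α(λ,λ'·x)α(λ',x)) satisfying α(λ,x) = e ⟺ λ = e for all x. Then the formulas γ∙(γ̄,x) = (γγ̄, x) and λ∙(γ̄,x) = (γ̄ α(λ,x)⁻¹, λ·x) define commuting measure-preserving actions of Γ and Λ on Ω := Γ × X (with counting measure times μ), and {e} × X is a fundamental domain for the Γ-action. -/
open MeasureTheory

/-! Ω = Γ × X is a product, so everything reduces to the invariance of counting measure on Γ: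
the Γ-action is left translation in the first factor, and, after swapping the factors, each
λ acts as a skew product over the measure-preserving map `act λ` whose fibre maps are right
translations of Γ. The cocycle identity makes `λ ↦ aL λ` an action (it forces `α(e, x) = e`),
and `{e} × X` meets every Γ-orbit `Γ × {x}` in exactly one point. -/

theorem measurePreserving_mul_right_skew {G X Y : Type*} [Group G] [Countable G]
    [MeasurableSpace G] [DiscreteMeasurableSpace G] [MeasurableSpace X] [MeasurableSpace Y]
    {μ : Measure X} {ν : Measure Y} [SFinite μ] [SFinite ν]
    {f : X → Y} (hf : MeasurePreserving f μ ν) {c : X → G} (hc : Measurable c) :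
    MeasurePreserving (fun p : G × X => (p.1 * c p.2, f p.2))
      (Measure.count.prod μ) (Measure.count.prod ν) := by
  have hskew : MeasurePreserving (fun p : X × G => (f p.1, p.2 * c p.1))
      (μ.prod Measure.count) (ν.prod Measure.count) :=
    hf.skew_product (g := fun x a => a * c x)
      (measurable_from_prod_countable_left fun a => hc.const_mul a)
      (ae_of_all _ fun x => (measurePreserving_mul_right Measure.count (c x)).map_eq)
  exact Measure.measurePreserving_swap.comp (hskew.comp Measure.measurePreserving_swap)

theorem isFundDom_singleton_one_prod {G X : Type*} [Group G] [MeasurableSpace G]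
    [MeasurableSingletonClass G] [MeasurableSpace X] (μ : Measure (G × X)) :
    IsFundDom (fun (g : G) (p : G × X) => (g * p.1, p.2)) μ ({1} ×ˢ Set.univ) := by
  refine ⟨((measurableSet_singleton 1).prod .univ).nullMeasurableSet,
    ae_of_all _ fun p => ⟨p.1⁻¹, by simp⟩, fun g₁ g₂ hne => Disjoint.aedisjoint ?_⟩
  rw [Set.disjoint_left]
  rintro p hp₁ hp₂
  simp only [Set.mem_preimage, Set.mem_prod, Set.mem_singleton_iff, Set.mem_univ,
    and_true] at hp₁ hp₂
  exact hne (mul_right_cancel (hp₁.trans hp₂.symm))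

theorem cocycle_apply_one {Λ G X : Type*} [Group Λ] [Group G] {act : Λ → X → X}
    (act_one : ∀ x, act 1 x = x) {α : Λ → X → G}
    (hcoc : ∀ l l' x, α (l * l') x = α l (act l' x) * α l' x) (x : X) : α 1 x = 1 := by
  have h := hcoc 1 1 x
  rwa [mul_one, act_one, left_eq_mul] at h

theorem cocycle_coupling_construction_general {Λ Γ X : Type} [Group Λ]
    [Group Γ] [Countable Γ] [MeasurableSpace Γ] [DiscreteMeasurableSpace Γ]
    [MeasurableSpace X] (μ : Measure X) [IsProbabilityMeasure μ]
    (act : Λ → X → X)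
    (act_one : ∀ x, act 1 x = x)
    (act_mul : ∀ a b x, act (a * b) x = act a (act b x))
    (act_mp : ∀ l, MeasurePreserving (act l) μ μ)
    (α : Λ → X → Γ) (hmeas : ∀ l, Measurable (α l))
    (hcoc : ∀ l l' x, α (l * l') x = α l (act l' x) * α l' x) :
    -- the two formulas
    ∀ aR : Γ → Γ × X → Γ × X, ∀ aL : Λ → Γ × X → Γ × X,
      (aR = fun γ p => (γ * p.1, p.2)) →
      (aL = fun l p => (p.1 * (α l p.2)⁻¹, act l p.2)) →
      -- define group actions:
      (∀ p, aR 1 p = p) ∧ (∀ γ γ' p, aR (γ * γ') p = aR γ (aR γ' p)) ∧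
      (∀ p, aL 1 p = p) ∧ (∀ l l' p, aL (l * l') p = aL l (aL l' p)) ∧
      -- which commute:
      (∀ l γ p, aL l (aR γ p) = aR γ (aL l p)) ∧
      -- are measure preserving for counting measure times μ:
      (∀ γ, MeasurePreserving (aR γ) (Measure.count.prod μ) (Measure.count.prod μ)) ∧
      (∀ l, MeasurePreserving (aL l) (Measure.count.prod μ) (Measure.count.prod μ)) ∧
      -- and `{e} × X` is a fundamental domain for the `Γ`-action:
      IsFundDom aR (Measure.count.prod μ) ({(1 : Γ)} ×ˢ (Set.univ : Set X)) := by
  rintro aR aL rfl rfl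
  refine ⟨fun p => by simp, fun γ γ' p => by simp [mul_assoc], fun p => ?_, fun l l' p => ?_,
    fun l γ p => by simp [mul_assoc], fun γ => ?_, fun l => ?_,
    isFundDom_singleton_one_prod _⟩
  · simp [cocycle_apply_one act_one hcoc, act_one]
  · simp only [hcoc, act_mul, mul_inv_rev, mul_assoc]
  · exact (measurePreserving_mul_left Measure.count γ).prod (.id μ)
  · exact measurePreserving_mul_right_skew (act_mp l) (hmeas l).inv

/-- given a probability measure-preserving `Λ`-action on `X` and a
measurable cocycle `α : Λ × X → Γ` with `α(λ,x) = e ↔ λ = e`, the formulas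
`γ ∙ (γ̄, x) = (γ γ̄, x)` and `λ ∙ (γ̄, x) = (γ̄ α(λ,x)⁻¹, λ · x)` define commuting
measure-preserving actions of `Γ` and `Λ` on `Ω = Γ × X` with the counting-times-`μ`
measure, and `{e} × X` is a fundamental domain for the `Γ`-action. -/
theorem cocycle_coupling_construction {Λ Γ X : Type} [Group Λ] [Countable Λ]
    [Group Γ] [Countable Γ] [MeasurableSpace Γ] [DiscreteMeasurableSpace Γ]
    [MeasurableSpace X] (μ : Measure X) [IsProbabilityMeasure μ]
    (act : Λ → X → X)
    (act_one : ∀ x, act 1 x = x)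
    (act_mul : ∀ a b x, act (a * b) x = act a (act b x))
    (act_mp : ∀ l, MeasurePreserving (act l) μ μ)
    (α : Λ → X → Γ) (hmeas : ∀ l, Measurable (α l))
    (hcoc : ∀ l l' x, α (l * l') x = α l (act l' x) * α l' x)
    (hinj : ∀ l x, α l x = 1 ↔ l = 1) :
    -- the two formulas
    ∀ aR : Γ → Γ × X → Γ × X, ∀ aL : Λ → Γ × X → Γ × X,
      (aR = fun γ p => (γ * p.1, p.2)) →
      (aL = fun l p => (p.1 * (α l p.2)⁻¹, act l p.2)) →
      -- define group actions:
      (∀ p, aR 1 p = p) ∧ (∀ γ γ' p, aR (γ * γ') p = aR γ (aR γ' p)) ∧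
      (∀ p, aL 1 p = p) ∧ (∀ l l' p, aL (l * l') p = aL l (aL l' p)) ∧
      -- which commute:
      (∀ l γ p, aL l (aR γ p) = aR γ (aL l p)) ∧
      -- are measure preserving for counting measure times μ:
      (∀ γ, MeasurePreserving (aR γ) (Measure.count.prod μ) (Measure.count.prod μ)) ∧
      (∀ l, MeasurePreserving (aL l) (Measure.count.prod μ) (Measure.count.prod μ)) ∧
      -- and `{e} × X` is a fundamental domain for the `Γ`-action:
      IsFundDom aR (Measure.count.prod μ) ({(1 : Γ)} ×ˢ (Set.univ : Set X)) :=
  cocycle_coupling_construction_general μ act act_one act_mul act_mp α hmeas hcoc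
end

section
/- Given an SMI-coupling of Λ into Γ with fundamental domains X ⊆ Y and induced cocycle α: Λ × X → Γ, the map α̂: X → [Λ,Γ] defined by α̂(x)(λ) = α(λ,x) is Λ-equivariant with respect to the action (λ·f)(x) = f(xλ)f(λ)⁻¹ on [Λ,Γ], and α̂(x) is injective for almost every x ∈ X. -/
open MeasureTheory

/-- The natural `Λ`-action on maps `f : Λ → Γ`: `(λ · f)(x) = f(xλ) f(λ)⁻¹`. -/
def ract {Λ Γ : Type*} [Group Λ] [Group Γ] (l : Λ) (f : Λ → Γ) : Λ → Γ :=
  fun x => f (x * l) * (f l)⁻¹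

/-! Both claims are uniqueness statements for fundamental domains. Almost surely, `α(λ'λ, x)` and
`α(λ', λ·x) α(λ, x)` are both elements of `Γ` moving `(λ'λ) x` into `X`, and a `Γ`-translate of
a point lies in `X` for at most one element of `Γ`; this is the cocycle identity, i.e. equivariance.
If `α(λ₁, x) = α(λ₂, x) = γ`, then `λ₁ (γ x)` and `λ₂ (γ x)` both lie in `X ⊆ Y`, which forces
`λ₁ = λ₂` since `Y` is a fundamental domain for `Λ`. -/

theorem IsFundDom.ae_eq_of_mem {G Ω : Type*} [Countable G] [MeasurableSpace Ω]
    {a : G → Ω → Ω} {μ : Measure Ω} {s : Set Ω} (h : IsFundDom a μ s) :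
    ∀ᵐ x ∂μ, ∀ g₁ g₂ : G, a g₁ x ∈ s → a g₂ x ∈ s → g₁ = g₂ := by
  refine ae_all_iff.2 fun g₁ => ae_all_iff.2 fun g₂ => ?_
  rcases eq_or_ne g₁ g₂ with rfl | hne
  · exact ae_of_all _ fun _ _ _ => rfl
  · filter_upwards [measure_eq_zero_iff_ae_notMem.1 (h.2.2 hne)] with x hx h₁ h₂
    exact absurd ⟨h₁, h₂⟩ hx

namespace Coupling

variable {Λ Γ Ω : Type*} [Group Λ] [Group Γ] [MeasurableSpace Ω] {μ : Measure Ω}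
  (c : Coupling Λ Γ Ω μ)

theorem ae_comp_actL (l : Λ) {p : Ω → Prop} (h : ∀ᵐ x ∂μ, p x) :
    ∀ᵐ x ∂μ, p (c.actL l x) :=
  (c.mpL l).quasiMeasurePreserving.ae h

theorem ae_comp_actR (g : Γ) {p : Ω → Prop} (h : ∀ᵐ x ∂μ, p x) :
    ∀ᵐ x ∂μ, p (c.actR g x) :=
  (c.mpR g).quasiMeasurePreserving.ae h

theorem ae_forall_comp_actR_actL [Countable Γ] (l : Λ) {p : Ω → Prop}
    (h : ∀ᵐ x ∂μ, p x) : ∀ᵐ x ∂μ, ∀ g : Γ, p (c.actR g (c.actL l x)) :=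
  ae_all_iff.2 fun g => c.ae_comp_actL l (c.ae_comp_actR g h)

theorem actR_mul_actL_mul (g h : Γ) (l' l : Λ) (x : Ω) :
    c.actR (g * h) (c.actL (l' * l) x) = c.actR g (c.actL l' (c.actR h (c.actL l x))) := by
  rw [c.actR_mul, c.actL_mul, c.comm]

def IsInducedCocycle (X : Set Ω) (dot : Λ → Ω → Ω) (α : Λ → Ω → Γ) : Prop :=
  ∀ l : Λ, ∀ᵐ x ∂μ, x ∈ X → dot l x = c.actR (α l x) (c.actL l x) ∧ dot l x ∈ X

variable {c} {X : Set Ω} {dot : Λ → Ω → Ω} {α : Λ → Ω → Γ}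

theorem IsInducedCocycle.mul_eq [Countable Γ]
    (hdot : c.IsInducedCocycle X dot α) (hX : IsFundDom c.actR μ X) (l' l : Λ) :
    ∀ᵐ x ∂μ, x ∈ X → α l' (dot l x) * α l x = α (l' * l) x := by
  filter_upwards [hdot l, hdot (l' * l), c.ae_forall_comp_actR_actL l (hdot l'),
    c.ae_comp_actL (l' * l) hX.ae_eq_of_mem] with x hl hl'l hl' huniq hx
  obtain ⟨hdl, hdlX⟩ := hl hx
  obtain ⟨hdl'l, hdl'lX⟩ := hl'l hx
  obtain ⟨hdl', hdl'X⟩ := hl' (α l x) (hdl ▸ hdlX)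
  rw [← hdl] at hdl' hdl'X
  refine huniq _ _ ?_ (hdl'l ▸ hdl'lX)
  rwa [c.actR_mul_actL_mul, ← hdl, ← hdl']

theorem IsInducedCocycle.ae_injective [Countable Λ] [Countable Γ] {Y : Set Ω}
    (hdot : c.IsInducedCocycle X dot α) (hY : IsFundDom c.actL μ Y) (hXY : X ⊆ Y) :
    ∀ᵐ x ∂μ, x ∈ X → Function.Injective fun l : Λ => α l x := by
  filter_upwards [ae_all_iff.2 hdot, ae_all_iff.2 fun g => c.ae_comp_actR g hY.ae_eq_of_mem]
    with x hdx huniq hx l₁ l₂ hα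
  have mem : ∀ l, c.actL l (c.actR (α l x) x) ∈ Y := fun l => by
    rw [c.comm, ← (hdx l hx).1]
    exact hXY (hdx l hx).2
  replace hα : α l₁ x = α l₂ x := hα
  exact huniq (α l₁ x) l₁ l₂ (mem l₁) (hα ▸ mem l₂)

end Coupling

theorem smi_cocycle_equivariant_injective_general {Λ Γ Ω : Type} [Group Λ] [Countable Λ]
    [Group Γ] [Countable Γ] [MeasurableSpace Ω] (μ : Measure Ω)
    (c : Coupling Λ Γ Ω μ) (X Y : Set Ω)
    (hX : IsFundDom c.actR μ X) (hY : IsFundDom c.actL μ Y)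
    (hXY : X ⊆ Y)
    (dot : Λ → Ω → Ω) (α : Λ → Ω → Γ)
    (hdot : ∀ l : Λ, ∀ᵐ x ∂μ, x ∈ X →
      dot l x = c.actR (α l x) (c.actL l x) ∧ dot l x ∈ X) :
    (∀ l : Λ, ∀ᵐ x ∂μ, x ∈ X →
        (fun l' : Λ => α l' (dot l x)) = ract l (fun l' : Λ => α l' x)) ∧
    (∀ᵐ x ∂μ, x ∈ X → Function.Injective fun l : Λ => α l x) := by
  have hα : c.IsInducedCocycle X dot α := hdot
  refine ⟨fun l => ?_, hα.ae_injective hY hXY⟩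
  filter_upwards [ae_all_iff.2 fun l' => hα.mul_eq hX l' l] with x hmul hx
  funext l'
  exact eq_mul_inv_of_mul_eq (hmul l' hx)

/-- for an SMI-coupling with fundamental domains `X ⊆ Y`, induced action
`dot` on `X` and induced cocycle `α` (characterized by `λ · x = α(λ,x) λ x ∈ X`), the
map `α̂ : X → [Λ,Γ]`, `α̂(x)(λ) = α(λ,x)`, is `Λ`-equivariant for the action
`(λ·f)(x) = f(xλ) f(λ)⁻¹`, and `α̂(x)` is injective for almost every `x ∈ X`. -/
theorem smi_cocycle_equivariant_injective {Λ Γ Ω : Type} [Group Λ] [Countable Λ]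
    [Group Γ] [Countable Γ] [MeasurableSpace Ω] (μ : Measure Ω)
    (c : Coupling Λ Γ Ω μ) (X Y : Set Ω)
    (hX : IsFundDom c.actR μ X) (hY : IsFundDom c.actL μ Y)
    (hXfin : μ X < ⊤) (hXY : X ⊆ Y)
    (dot : Λ → Ω → Ω) (α : Λ → Ω → Γ)
    (hdot : ∀ l : Λ, ∀ᵐ x ∂μ, x ∈ X →
      dot l x = c.actR (α l x) (c.actL l x) ∧ dot l x ∈ X) :
    (∀ l : Λ, ∀ᵐ x ∂μ, x ∈ X →
        (fun l' : Λ => α l' (dot l x)) = ract l (fun l' : Λ => α l' x)) ∧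
    (∀ᵐ x ∂μ, x ∈ X → Function.Injective fun l : Λ => α l x) :=
  smi_cocycle_equivariant_injective_general μ c X Y hX hY hXY dot α hdot
end

section
/- Let GΘ be a graph product over graph Θ with vertex groups A₁,…,Aₙ. Fix a vertex group A_k with vertex v_k, and let L ≤ GΘ be the subgroup generated by the vertex groups of lk(v_k). Then every element g ∈ GΘ can be written g = a·l·h where a ∈ A_k, l ∈ L, and h is either trivial or has a reduced expression beginning with an element of some vertex group A_m whose vertex is not in st(v_k). -/
open Monoid MeasureTheory

/-- The normal subgroup of the free product `⋆ᵥ A v` generated by the commutators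
`[a,b]` with `a ∈ A i`, `b ∈ A j`, for adjacent vertices `i, j` of `Θ`. -/
def graphProductRels {V : Type} (Θ : SimpleGraph V) (A : V → Type) [∀ v, Group (A v)] :
    Subgroup (Monoid.CoprodI A) :=
  Subgroup.normalClosure
    {x | ∃ (i j : V) (a : A i) (b : A j), Θ.Adj i j ∧
      x = Monoid.CoprodI.of a * Monoid.CoprodI.of b *
            (Monoid.CoprodI.of a)⁻¹ * (Monoid.CoprodI.of b)⁻¹}

instance graphProductRels_normal {V : Type} (Θ : SimpleGraph V) (A : V → Type)
    [∀ v, Group (A v)] : (graphProductRels Θ A).Normal :=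
  Subgroup.normalClosure_normal

/-- The graph product of the groups `A v` over the graph `Θ`: the quotient of the free
product by the relations making vertex groups of adjacent vertices commute. -/
def GraphProduct {V : Type} (Θ : SimpleGraph V) (A : V → Type) [∀ v, Group (A v)] :
    Type :=
  Monoid.CoprodI A ⧸ graphProductRels Θ A

instance {V : Type} (Θ : SimpleGraph V) (A : V → Type) [∀ v, Group (A v)] :
    Group (GraphProduct Θ A) :=
  inferInstanceAs (Group (Monoid.CoprodI A ⧸ graphProductRels Θ A))

/-- The canonical homomorphism from a vertex group into the graph product. -/
def gpOf {V : Type} (Θ : SimpleGraph V) (A : V → Type) [∀ v, Group (A v)] (v : V) :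
    A v →* GraphProduct Θ A :=
  (QuotientGroup.mk' (graphProductRels Θ A)).comp Monoid.CoprodI.of

/-- An element of a graph product is a syllable if it lies in (the image of) one of
the vertex groups. -/
def IsSyllable {V : Type} (Θ : SimpleGraph V) (A : V → Type) [∀ v, Group (A v)]
    (x : GraphProduct Θ A) : Prop :=
  ∃ (v : V) (a : A v), x = gpOf Θ A v a

/-- The syllable length of an element of a graph product: the least number of
syllables needed to write it. -/
noncomputable def sylLength {V : Type} (Θ : SimpleGraph V) (A : V → Type)
    [∀ v, Group (A v)] (g : GraphProduct Θ A) : ℕ :=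
  sInf {n | ∃ L : List (GraphProduct Θ A),
    (∀ x ∈ L, IsSyllable Θ A x) ∧ L.prod = g ∧ L.length = n}

/-- The subgroup of the graph product generated by the vertex groups of the link of
`v`. -/
def linkSubgroup {V : Type} (Θ : SimpleGraph V) (A : V → Type) [∀ v, Group (A v)]
    (v : V) : Subgroup (GraphProduct Θ A) :=
  Subgroup.closure (⋃ u ∈ Θ.neighborSet v, Set.range (gpOf Θ A u))

/-!
Write `g` as a shortest word in syllables and read it from the left; every tail of a shortest
word is again shortest. A leading syllable of `A k` is absorbed into `a`; one of a vertex
group of `lk(k)` commutes past `a` and is absorbed into `l`; as soon as a syllable from outside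
`st(k)` leads, the remaining shortest word is `h`.
-/

namespace GraphProduct

variable {V : Type} {Θ : SimpleGraph V} {A : V → Type} [∀ v, Group (A v)]

theorem gpOf_commute_of_adj {i j : V} (h : Θ.Adj i j) (a : A i) (b : A j) :
    Commute (gpOf Θ A i a) (gpOf Θ A j b) :=
  commutatorElement_eq_one_iff_commute.1 <|
    (QuotientGroup.eq_one_iff _).2 (Subgroup.subset_normalClosure ⟨i, j, a, b, h, rfl⟩)

theorem exists_list_isSyllable_prod_eq (g : GraphProduct Θ A) :
    ∃ L : List (GraphProduct Θ A), (∀ x ∈ L, IsSyllable Θ A x) ∧ L.prod = g := by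
  induction g using QuotientGroup.induction_on with
  | H w =>
    induction w using Monoid.CoprodI.induction_on with
    | one => exact ⟨[], by simp, rfl⟩
    | of i a => exact ⟨[gpOf Θ A i a], by simpa using ⟨i, a, rfl⟩, by simp; rfl⟩
    | mul x y hx hy =>
      obtain ⟨L₁, hL₁, hprod₁⟩ := hx
      obtain ⟨L₂, hL₂, hprod₂⟩ := hy
      refine ⟨L₁ ++ L₂, fun z hz ↦ (List.mem_append.1 hz).elim (hL₁ z) (hL₂ z), ?_⟩
      rw [List.prod_append, hprod₁, hprod₂]
      rfl

theorem sylLength_prod_le {L : List (GraphProduct Θ A)} (hL : ∀ x ∈ L, IsSyllable Θ A x) :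
    sylLength Θ A L.prod ≤ L.length :=
  Nat.sInf_le ⟨L, hL, rfl, rfl⟩

def IsMinimalWord (L : List (GraphProduct Θ A)) : Prop :=
  (∀ x ∈ L, IsSyllable Θ A x) ∧ L.length = sylLength Θ A L.prod

theorem exists_isMinimalWord (g : GraphProduct Θ A) :
    ∃ L : List (GraphProduct Θ A), IsMinimalWord L ∧ L.prod = g := by
  obtain ⟨L, hL, hprod⟩ := exists_list_isSyllable_prod_eq g
  obtain ⟨M, hM, rfl, hlen⟩ := Nat.sInf_mem (⟨L.length, L, hL, hprod, rfl⟩ :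
    {n | ∃ L : List (GraphProduct Θ A),
      (∀ x ∈ L, IsSyllable Θ A x) ∧ L.prod = g ∧ L.length = n}.Nonempty)
  exact ⟨M, ⟨hM, hlen⟩, rfl⟩

namespace IsMinimalWord

variable {L : List (GraphProduct Θ A)}

theorem ne_one (hL : IsMinimalWord L) {x : GraphProduct Θ A} (hx : x ∈ L) : x ≠ 1 := by
  rintro rfl
  obtain ⟨s, t, rfl⟩ := List.append_of_mem hx
  have hshorter := sylLength_prod_le (L := s ++ t) fun y hy ↦ hL.1 y (by simp at hy ⊢; tauto)
  have hlen := hL.2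
  simp only [List.prod_append, List.prod_cons, one_mul, List.length_append,
    List.length_cons] at hshorter hlen
  omega

theorem of_cons {x : GraphProduct Θ A} (hL : IsMinimalWord (x :: L)) : IsMinimalWord L := by
  have hL_syl : ∀ y ∈ L, IsSyllable Θ A y := fun y hy ↦ hL.1 y (List.mem_cons_of_mem x hy)
  obtain ⟨M, hM, hprod⟩ := exists_isMinimalWord L.prod
  -- prepending `x` to a minimal word for `L.prod` bounds the length of `x :: L`
  have hcons := sylLength_prod_le (L := x :: M) (by simpa using ⟨hL.1 x (by simp), hM.1⟩)
  have hlen := hL.2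
  have htail := sylLength_prod_le hL_syl
  rw [List.prod_cons, hprod] at hcons
  rw [List.prod_cons] at hlen
  simp only [List.length_cons, hM.2, hprod] at hcons hlen
  exact ⟨hL_syl, by omega⟩

end IsMinimalWord

def StartsOutsideStar (k : V) (h : GraphProduct Θ A) : Prop :=
  h = 1 ∨ ∃ (L : List (GraphProduct Θ A)) (m : V) (b : A m),
    m ≠ k ∧ ¬ Θ.Adj k m ∧ b ≠ 1 ∧
    (∀ x ∈ L, IsSyllable Θ A x ∧ x ≠ 1) ∧ L.prod = h ∧
    L.length = sylLength Θ A h ∧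
    L.head? = some (gpOf Θ A m b)

def HasStarDecomposition (k : V) (g : GraphProduct Θ A) : Prop :=
  ∃ (a : A k) (l h : GraphProduct Θ A),
    g = gpOf Θ A k a * l * h ∧ l ∈ linkSubgroup Θ A k ∧ StartsOutsideStar k h

variable {k m : V} {g : GraphProduct Θ A}

theorem IsMinimalWord.startsOutsideStar {b : A m} {L : List (GraphProduct Θ A)}
    (hL : IsMinimalWord (gpOf Θ A m b :: L)) (hmk : m ≠ k) (hadj : ¬Θ.Adj k m) :
    StartsOutsideStar k (gpOf Θ A m b :: L).prod := by
  have hb : b ≠ 1 := by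
    rintro rfl
    exact hL.ne_one List.mem_cons_self (map_one _)
  exact .inr ⟨_, m, b, hmk, hadj, hb, fun x hx ↦ ⟨hL.1 x hx, hL.ne_one hx⟩, rfl, hL.2, rfl⟩

theorem StartsOutsideStar.hasStarDecomposition (hg : StartsOutsideStar k g) :
    HasStarDecomposition k g :=
  ⟨1, 1, g, by simp, one_mem _, hg⟩

namespace HasStarDecomposition

theorem gpOf_mul_self (hg : HasStarDecomposition k g) (b : A k) :
    HasStarDecomposition k (gpOf Θ A k b * g) := by
  obtain ⟨a, l, h, rfl, hl, hh⟩ := hg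
  exact ⟨b * a, l, h, by simp only [map_mul, mul_assoc], hl, hh⟩

theorem gpOf_mul_of_adj (hg : HasStarDecomposition k g) (hadj : Θ.Adj k m) (b : A m) :
    HasStarDecomposition k (gpOf Θ A m b * g) := by
  obtain ⟨a, l, h, rfl, hl, hh⟩ := hg
  have hb : gpOf Θ A m b ∈ linkSubgroup Θ A k :=
    Subgroup.subset_closure (Set.mem_biUnion hadj ⟨b, rfl⟩)
  refine ⟨a, gpOf Θ A m b * l, h, ?_, mul_mem hb hl, hh⟩
  rw [← mul_assoc, ← mul_assoc, ← (gpOf_commute_of_adj hadj a b).eq, mul_assoc _ _ l]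

end HasStarDecomposition

theorem IsMinimalWord.hasStarDecomposition (k : V) :
    ∀ {L : List (GraphProduct Θ A)}, IsMinimalWord L → HasStarDecomposition k L.prod
  | [], _ => StartsOutsideStar.hasStarDecomposition (.inl rfl)
  | x :: L, hL => by
    obtain ⟨m, b, rfl⟩ := hL.1 x List.mem_cons_self
    have ih := hasStarDecomposition k hL.of_cons
    rw [List.prod_cons]
    by_cases hmk : m = k
    · subst hmk
      exact ih.gpOf_mul_self b
    by_cases hadj : Θ.Adj k m
    · exact ih.gpOf_mul_of_adj hadj b
    · exact (hL.startsOutsideStar hmk hadj).hasStarDecomposition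

end GraphProduct

theorem graph_product_decomposition_general {V : Type}
    (Θ : SimpleGraph V) (A : V → Type) [∀ v, Group (A v)]
    (k : V) (g : GraphProduct Θ A) :
    ∃ (a : A k) (l h : GraphProduct Θ A),
      g = gpOf Θ A k a * l * h ∧
      l ∈ linkSubgroup Θ A k ∧
      (h = 1 ∨ ∃ (L : List (GraphProduct Θ A)) (m : V) (b : A m),
        m ≠ k ∧ ¬ Θ.Adj k m ∧ b ≠ 1 ∧
        (∀ x ∈ L, IsSyllable Θ A x ∧ x ≠ 1) ∧ L.prod = h ∧
        L.length = sylLength Θ A h ∧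
        L.head? = some (gpOf Θ A m b)) := by
  obtain ⟨L, hL, rfl⟩ := GraphProduct.exists_isMinimalWord g
  exact hL.hasStarDecomposition k

/-- in a graph product `GΘ`, fixing a vertex `k`, every element `g` can
be written `g = a · l · h` with `a ∈ A k`, `l` in the subgroup generated by the vertex
groups of `lk(k)`, and `h` either trivial or admitting a reduced expression (a
syllable decomposition of minimal length, with all syllables nontrivial) whose first
syllable belongs to a vertex group `A m` with `m ∉ st(k)`. -/
theorem graph_product_decomposition {V : Type} [Fintype V] [DecidableEq V]
    (Θ : SimpleGraph V) (A : V → Type) [∀ v, Group (A v)]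
    (k : V) (g : GraphProduct Θ A) :
    ∃ (a : A k) (l h : GraphProduct Θ A),
      g = gpOf Θ A k a * l * h ∧
      l ∈ linkSubgroup Θ A k ∧
      (h = 1 ∨ ∃ (L : List (GraphProduct Θ A)) (m : V) (b : A m),
        m ≠ k ∧ ¬ Θ.Adj k m ∧ b ≠ 1 ∧
        (∀ x ∈ L, IsSyllable Θ A x ∧ x ≠ 1) ∧ L.prod = h ∧
        L.length = sylLength Θ A h ∧
        L.head? = some (gpOf Θ A m b)) :=
  graph_product_decomposition_general Θ A k g
end
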